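/- arXiv:2603.00015 — 6 statements merged into one kernel-verified Lean document; each statement's English description precedes it below -/
import Mathlib

section
/- For every n ≥ 1, the ai-semiring S_{(4,545)} satisfies the inequality x₁x₂⋯xₙxₙ₊₁ ≤ x₁x₂⋯xₙ + (x₁ + x₂ + ⋯ + xₙ)·xₙ₊₁, where u ≤ v means u + v = v. -/
/-- Multiplication table of S_{(4,545)}; encoding: 0 = 0, 1 = 1, 2 = a, 3 = ∞.
Note 1 is a multiplicative identity. -/
def mul545 (x y : Fin 4) : Fin 4 :=
  ![![0, 0, 2, 3],
    ![0, 1, 2, 3],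
    ![2, 2, 3, 3],
    ![3, 3, 3, 3]] x y

/-- Invariant: reachable (product, sum) pairs. -/
def inv545 (p s : Fin 4) : Bool :=
  (p, s) ∈ [((0:Fin 4),(0:Fin 4)), (0,1), (1,1), (2,2), (3,2), (3,3)]

lemma inv545_step (x p s : Fin 4) (h : inv545 p s = true) :
    inv545 (mul545 x p) (max x s) = true := by
  revert h; revert x p s; decide

lemma inv545_fold : ∀ l : List (Fin 4), l ≠ [] →
    inv545 (l.foldr mul545 1) (l.foldr max 0) = true := by
  intro l
  induction l with
  | nil => intro h; exact absurd rfl h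
  | cons x l ih =>
    intro _
    cases l with
    | nil => revert x; decide
    | cons y l' =>
      exact inv545_step x _ _ (ih (by simp))

lemma claim545 (p s t : Fin 4) (h : inv545 p s = true) :
    max (mul545 p t) (max p (mul545 s t)) = max p (mul545 s t) := by
  revert h; revert p s t; decide

/-- For every n ≥ 1, S_{(4,545)} satisfies
x₁⋯xₙxₙ₊₁ ≤ x₁⋯xₙ + (x₁ + ⋯ + xₙ)·xₙ₊₁, where addition is `max` and `u ≤ v` means
`u + v = v`. -/
theorem stmt9 : ∀ n : ℕ, 1 ≤ n → ∀ (s : Fin n → Fin 4) (t : Fin 4),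
    max (mul545 ((List.ofFn s).foldr mul545 1) t)
        (max ((List.ofFn s).foldr mul545 1) (mul545 ((List.ofFn s).foldr max 0) t))
    = max ((List.ofFn s).foldr mul545 1) (mul545 ((List.ofFn s).foldr max 0) t) := by
  intro n hn s t
  apply claim545
  apply inv545_fold
  intro h
  have := congrArg List.length h
  simp at this
  omega
end

section
/- For every n ≥ 1, the ai-semiring S_{(4,545)} satisfies the inequality x₁x₂⋯xₙxₙ₊₁ ≤ x₁x₂⋯xₙ + x₁xₙ₊₁y₁ + x₂xₙ₊₁y₂ + ⋯ + xₙxₙ₊₁yₙ, where u ≤ v means u + v = v. -/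
lemma two_le_or_two_le_of_two_le_mul545 {x y : Fin 4} (h : 2 ≤ mul545 x y) : 2 ≤ x ∨ 2 ≤ y := by
  revert x y; decide

lemma exists_two_le_of_two_le_foldr_mul545 :
    ∀ {l : List (Fin 4)}, 2 ≤ l.foldr mul545 1 → ∃ x ∈ l, 2 ≤ x
  | [], h => absurd h (by decide)
  | x :: l, h => by
    rcases two_le_or_two_le_of_two_le_mul545 h with hx | hl
    · exact ⟨x, List.mem_cons_self, hx⟩
    · obtain ⟨y, hy, hy2⟩ := exists_two_le_of_two_le_foldr_mul545 hl
      exact ⟨y, List.mem_cons_of_mem x hy, hy2⟩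

lemma mul545_le_max_mul545_mul545 (p t x y : Fin 4) (h : 2 ≤ p → 2 ≤ x) :
    mul545 p t ≤ max p (mul545 (mul545 x t) y) := by
  revert p t x y; decide

/-- For every n ≥ 1, S_{(4,545)} satisfies
x₁⋯xₙxₙ₊₁ ≤ x₁⋯xₙ + x₁xₙ₊₁y₁ + ⋯ + xₙxₙ₊₁yₙ, where addition is `max` and `u ≤ v`
means `u + v = v`. -/
theorem stmt10 : ∀ n : ℕ, 1 ≤ n → ∀ (s : Fin n → Fin 4) (t : Fin 4) (ys : Fin n → Fin 4),
    max (mul545 ((List.ofFn s).foldr mul545 1) t)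
        (max ((List.ofFn s).foldr mul545 1)
             ((List.ofFn (fun i => mul545 (mul545 (s i) t) (ys i))).foldr max 0))
    = max ((List.ofFn s).foldr mul545 1)
          ((List.ofFn (fun i => mul545 (mul545 (s i) t) (ys i))).foldr max 0) := by
  intro n hn s t ys
  set p := (List.ofFn s).foldr mul545 1
  obtain ⟨i, hi⟩ : ∃ i : Fin n, 2 ≤ p → 2 ≤ s i := by
    by_cases hp : 2 ≤ p
    · obtain ⟨x, hx, hx2⟩ := exists_two_le_of_two_le_foldr_mul545 hp
      obtain ⟨i, rfl⟩ := List.mem_ofFn.mp hx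
      exact ⟨i, fun _ => hx2⟩
    · exact ⟨⟨0, hn⟩, fun h => absurd h hp⟩
  apply max_eq_right
  calc mul545 p t ≤ max p (mul545 (mul545 (s i) t) (ys i)) :=
        mul545_le_max_mul545_mul545 p t (s i) (ys i) hi
    _ ≤ _ := max_le_max le_rfl (List.le_max_of_le' 0 (List.mem_ofFn.mpr ⟨i, rfl⟩) le_rfl)
end

section
/- Let q be a word and u = u₁ + ⋯ + uₙ a sum of words over a set of variables X. The inequality q ≤ u holds in the 3-element ai-semiring S_{53} if and only if: (1) some word uᵢ has length at least 2; (2) every variable of q occurs in some word of u; and (3) for every two-element multiset {x,y} of variables occurring as a length-2 subword of q, there exist indices i and a length-2 subword w of uᵢ with all variables of w contained in {x,y}. -/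
/-!
Encode 1, a, ∞ as 0, 1, 2. Then a word evaluates to the sum of the values of its letters,
truncated at 2, and a sum of words to the maximum of these. So `q ≤ u` says exactly: if the
letters of `q` have total value at least 1 (resp. 2), then so do those of some `uᵢ`.
Valuing a single letter `x` by ∞ forces (2); valuing `x` and `y` by `a` forces (3); and (1)
follows from (2), (3) and nontriviality. Conversely, value 1 is handled by (2), and a total
value of at least 2 in `q` comes from a letter valued ∞, which (2) finds in some `uᵢ`, or from
two letters of positive value, which (3) turns into two letters of positive value in some `uᵢ`.
-/

/-- Multiplication table of S_{53}; encoding: 0 = 1, 1 = a, 2 = ∞.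
Note 0 (the element 1) is a multiplicative identity. -/
def mul53 (x y : Fin 3) : Fin 3 :=
  ![![0, 1, 2],
    ![1, 2, 2],
    ![2, 2, 2]] x y

lemma val_mul53 : ∀ x y : Fin 3, (mul53 x y : ℕ) = min (x + y : ℕ) 2 := by decide

lemma le_foldr_max_iff {β : Type*} [LinearOrder β] [OrderBot β] {a : β} {l : List β} :
    a ≤ l.foldr max ⊥ ↔ a = ⊥ ∨ ∃ b ∈ l, a ≤ b := by
  induction l with
  | nil => simp
  | cons b l ih => simp [ih, or_left_comm]

section Weight

variable {α : Type*}

def weight (φ : α → Fin 3) (s : Multiset α) : ℕ := (s.map fun x => (φ x : ℕ)).sum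

variable (φ : α → Fin 3)

lemma val_foldr_mul53 (w : List α) :
    (((w.map φ).foldr mul53 0 : Fin 3) : ℕ) = min (weight φ w) 2 := by
  induction w with
  | nil => rfl
  | cons a w ih =>
    simp only [List.map_cons, List.foldr_cons, val_mul53, ih, weight, ← Multiset.cons_coe,
      Multiset.map_cons, Multiset.sum_cons]
    omega

lemma weight_mono {s t : Multiset α} (h : s ≤ t) : weight φ s ≤ weight φ t := by
  obtain ⟨r, rfl⟩ := Multiset.le_iff_exists_add.mp h
  simp [weight]

lemma le_weight_of_mem {s : Multiset α} {x : α} (hx : x ∈ s) : (φ x : ℕ) ≤ weight φ s :=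
  Multiset.le_sum_of_mem (Multiset.mem_map_of_mem (fun x => (φ x : ℕ)) hx)

lemma exists_mem_ne_zero_of_weight_ne_zero {s : Multiset α} (h : weight φ s ≠ 0) :
    ∃ x ∈ s, φ x ≠ 0 := by
  contrapose! h
  exact Multiset.sum_eq_zero_iff.mpr fun n hn => by
    obtain ⟨x, hx, rfl⟩ := Multiset.mem_map.mp hn
    simp [h x hx]

lemma card_le_weight {s : Multiset α} (h : ∀ x ∈ s, φ x ≠ 0) : Multiset.card s ≤ weight φ s := by
  have := Multiset.card_nsmul_le_sum (s := s.map fun x => (φ x : ℕ)) (a := 1) fun n hn => by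
    obtain ⟨x, hx, rfl⟩ := Multiset.mem_map.mp hn
    exact Nat.one_le_iff_ne_zero.mpr (Fin.val_ne_zero_iff.mpr (h x hx))
  simpa [weight] using this

lemma eq_two_or_exists_pair_of_two_le_weight {s : Multiset α} (h : 2 ≤ weight φ s) :
    (∃ x ∈ s, φ x = 2) ∨ ∃ x y, {x, y} ≤ s ∧ φ x ≠ 0 ∧ φ y ≠ 0 := by
  induction s using Multiset.induction_on with
  | empty => simp [weight] at h
  | cons x s ih =>
    have hcons : weight φ (x ::ₘ s) = φ x + weight φ s := by simp [weight]
    by_cases hs : 2 ≤ weight φ s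
    · rcases ih hs with ⟨y, hy, hfy⟩ | ⟨y, z, hyz, hy, hz⟩
      · exact .inl ⟨y, Multiset.mem_cons_of_mem hy, hfy⟩
      · exact .inr ⟨y, z, hyz.trans (Multiset.le_cons_self _ _), hy, hz⟩
    by_cases hx : φ x = 2
    · exact .inl ⟨x, Multiset.mem_cons_self _ _, hx⟩
    have hx2 : (φ x : ℕ) < 2 := by omega
    obtain ⟨y, hy, hfy⟩ := exists_mem_ne_zero_of_weight_ne_zero φ (s := s) (by omega)
    exact .inr ⟨x, y, Multiset.cons_le_cons x (Multiset.singleton_le.mpr hy),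
      Fin.val_ne_zero_iff.mp (by omega), hfy⟩

lemma max_foldr_mul53_eq_iff (q : List α) (u : List (List α)) :
    max ((q.map φ).foldr mul53 0) ((u.map fun w => (w.map φ).foldr mul53 0).foldr max 0)
        = (u.map fun w => (w.map φ).foldr mul53 0).foldr max 0 ↔
      weight φ q = 0 ∨ ∃ w ∈ u, min (weight φ q) 2 ≤ weight φ w := by
  rw [max_eq_right_iff]
  refine (le_foldr_max_iff (β := Fin 3)).trans ?_
  simp only [List.mem_map, exists_exists_and_eq_and]
  simp only [Fin.le_def, Fin.ext_iff, val_foldr_mul53, bot_eq_zero, Fin.val_zero, le_min_iff,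
    min_le_right, and_true]
  exact or_congr_left (by omega)

end Weight

section Conditions

variable {α : Type*}

def CoversPairs (q : List α) (u : List (List α)) : Prop :=
  ∀ x y : α, ({x, y} : Multiset α) ≤ q →
    ∃ w ∈ u, ∃ p : Multiset α, Multiset.card p = 2 ∧ p ≤ (w : Multiset α) ∧ ∀ z ∈ p, z = x ∨ z = y

variable {q : List α} {u : List (List α)}

lemma exists_mem_of_weight_two [DecidableEq α]
    (H : ∀ φ : α → Fin 3, 2 ≤ weight φ q → ∃ w ∈ u, 2 ≤ weight φ w) {x : α} (hx : x ∈ q) :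
    ∃ w ∈ u, x ∈ w := by
  let φ : α → Fin 3 := fun z => if z = x then 2 else 0
  obtain ⟨w, hw, hφw⟩ := H φ (by simpa [φ] using le_weight_of_mem φ (Multiset.mem_coe.mpr hx))
  obtain ⟨z, hz, hφz⟩ := exists_mem_ne_zero_of_weight_ne_zero φ (s := w) (by omega)
  obtain rfl : z = x := by by_contra h; simp [φ, h] at hφz
  exact ⟨w, hw, hz⟩

lemma coversPairs_of_weight_two [DecidableEq α]
    (H : ∀ φ : α → Fin 3, 2 ≤ weight φ q → ∃ w ∈ u, 2 ≤ weight φ w) : CoversPairs q u := by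
  intro x y hxy
  let φ : α → Fin 3 := fun z => if z = x ∨ z = y then 1 else 0
  have hφ : ∀ z, φ z ≠ 0 ↔ z = x ∨ z = y := fun z => by by_cases h : z = x ∨ z = y <;> simp [φ, h]
  have hq : 2 ≤ weight φ q := by simpa [weight, φ] using weight_mono φ hxy
  obtain ⟨w, hw, hφw⟩ := H φ hq
  rcases eq_two_or_exists_pair_of_two_le_weight φ hφw with ⟨z, -, hz⟩ | ⟨a, b, hab, ha, hb⟩
  · by_cases h : z = x ∨ z = y <;> simp [φ, h] at hz
  · refine ⟨w, hw, {a, b}, rfl, hab, ?_⟩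
    simp only [Multiset.insert_eq_cons, Multiset.mem_cons, Multiset.mem_singleton]
    rintro z (rfl | rfl)
    exacts [(hφ z).mp ha, (hφ z).mp hb]

lemma weight_eq_zero_or_exists_le_of_conditions (hmem : ∀ x ∈ q, ∃ w ∈ u, x ∈ w)
    (hpair : CoversPairs q u) (φ : α → Fin 3) :
    weight φ q = 0 ∨ ∃ w ∈ u, min (weight φ q) 2 ≤ weight φ w := by
  rcases Nat.eq_zero_or_pos (weight φ q) with h0 | hpos
  · exact .inl h0
  right
  by_cases h2 : 2 ≤ weight φ q
  · rcases eq_two_or_exists_pair_of_two_le_weight φ h2 with ⟨x, hx, hφx⟩ | ⟨x, y, hxy, hx, hy⟩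
    · obtain ⟨w, hw, hxw⟩ := hmem x hx
      have := le_weight_of_mem φ (Multiset.mem_coe.mpr hxw)
      exact ⟨w, hw, by rw [hφx] at this; omega⟩
    · obtain ⟨w, hw, p, hp, hpw, hpxy⟩ := hpair x y hxy
      have hp0 : ∀ z ∈ p, φ z ≠ 0 := fun z hz => by
        rcases hpxy z hz with rfl | rfl <;> assumption
      have := (card_le_weight φ hp0).trans (weight_mono φ hpw)
      exact ⟨w, hw, by omega⟩
  · obtain ⟨x, hx, hφx⟩ := exists_mem_ne_zero_of_weight_ne_zero φ hpos.ne'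
    obtain ⟨w, hw, hxw⟩ := hmem x hx
    have := le_weight_of_mem φ (Multiset.mem_coe.mpr hxw)
    have := Fin.val_ne_zero_iff.mpr hφx
    exact ⟨w, hw, by omega⟩

lemma exists_two_le_length_of_conditions (hq : q ≠ []) (hune : ∀ w ∈ u, w ≠ [])
    (hnt : ∀ w ∈ u, (w : Multiset α) ≠ q) (hmem : ∀ x ∈ q, ∃ w ∈ u, x ∈ w)
    (hpair : CoversPairs q u) : ∃ w ∈ u, 2 ≤ w.length := by
  match q, hq with
  | [x], _ =>
    obtain ⟨w, hw, hxw⟩ := hmem x (List.mem_singleton_self x)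
    refine ⟨w, hw, ?_⟩
    obtain _ | ⟨a, _ | ⟨b, r⟩⟩ := w
    · exact absurd rfl (hune _ hw)
    · obtain rfl := List.mem_singleton.mp hxw
      exact absurd rfl (hnt _ hw)
    · simp
  | x :: y :: r, _ =>
    obtain ⟨w, hw, p, hp, hpw, -⟩ := hpair x y (by simp [← Multiset.cons_coe])
    exact ⟨w, hw, hp ▸ Multiset.card_le_card hpw⟩

end Conditions

/-- Characterization of the nontrivial inequalities `q ≤ u₁ + ⋯ + uₙ` valid in S_{53}:
the inequality holds iff (1) some `uᵢ` has length ≥ 2; (2) every variable of `q`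
occurs in some word of `u`; (3) for every length-2 subword {x,y} of `q` there is a
length-2 subword of some `uᵢ` whose variables are contained in {x,y}. Words are
nonempty lists of variables (variables = ℕ), identified up to multiset equality;
a length-2 subword is a degree-2 multiset divisor. Addition of S_{53} is `max` in the
chain 1 < a < ∞ (encoded 0 < 1 < 2). -/
theorem stmt14 : ∀ (q : List ℕ) (u : List (List ℕ)),
    q ≠ [] → u ≠ [] → (∀ w ∈ u, w ≠ []) →
    (∀ w ∈ u, (↑w : Multiset ℕ) ≠ (↑q : Multiset ℕ)) →
    ((∀ φ : ℕ → Fin 3,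
        max ((q.map φ).foldr mul53 0)
            ((u.map fun w => (w.map φ).foldr mul53 0).foldr max 0)
          = (u.map fun w => (w.map φ).foldr mul53 0).foldr max 0)
      ↔ ((∃ w ∈ u, 2 ≤ w.length) ∧
         (∀ x ∈ q, ∃ w ∈ u, x ∈ w) ∧
         (∀ x y : ℕ, ({x, y} : Multiset ℕ) ≤ (↑q : Multiset ℕ) →
            ∃ w ∈ u, ∃ p : Multiset ℕ, Multiset.card p = 2 ∧
              p ≤ (↑w : Multiset ℕ) ∧ ∀ z ∈ p, z = x ∨ z = y))) := by
  intro q u hq _ hune hnt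
  simp only [max_foldr_mul53_eq_iff]
  constructor
  · intro H
    have H2 (φ : ℕ → Fin 3) (h : 2 ≤ weight φ q) : ∃ w ∈ u, 2 ≤ weight φ w := by
      obtain ⟨w, hw, hle⟩ := (H φ).resolve_left (by omega)
      exact ⟨w, hw, by omega⟩
    have hmem := fun x => exists_mem_of_weight_two H2 (x := x)
    have hpair := coversPairs_of_weight_two H2
    exact ⟨exists_two_le_length_of_conditions hq hune hnt hmem hpair, hmem, hpair⟩
  · rintro ⟨-, hmem, hpair⟩
    exact weight_eq_zero_or_exists_le_of_conditions hmem hpair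
end

section
/- [Sufficiency direction] Let q be a word and u = u₁ + ⋯ + uₙ a sum of words. Assume: some uᵢ has length ≥ 2; every variable of q occurs in u; and for every pair of variable occurrences xy in q there is a length-2 subword w of some uⱼ with variables contained in {x, y}. Then for every assignment φ of values in S_{53} to the variables, φ(q) ≤ φ(u), i.e. φ(q) + φ(u) = φ(u). -/
lemma mul53_val : ∀ a b : Fin 3, (mul53 a b).val = min 2 (a.val + b.val) := by decide

lemma foldr_val (φ : ℕ → Fin 3) (l : List ℕ) :
    ((l.map φ).foldr mul53 0).val = min 2 ((l.map fun z => (φ z).val).sum) := by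
  induction l with
  | nil => simp
  | cons a l ih => simp [mul53_val, ih]; omega

lemma le_foldr_max (x : Fin 3) (l : List (Fin 3)) (hx : x ∈ l) : x ≤ l.foldr max 0 := by
  induction l with
  | nil => cases hx
  | cons a l ih =>
    rcases List.mem_cons.1 hx with h | h
    · simp [h]
    · exact le_trans (ih h) (le_max_right _ _)

/-- Sufficiency: if some `uᵢ` has length ≥ 2, every variable of `q` occurs in `u`, and
every length-2 subword of `q` dominates (contains the variables of) a length-2 subword
of some `uⱼ`, then `q ≤ u₁ + ⋯ + uₙ` holds in S_{53}: for every assignment φ,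
φ(q) + φ(u) = φ(u) (addition = max in the chain 1 < a < ∞, encoded 0 < 1 < 2). -/
theorem stmt15 : ∀ (q : List ℕ) (u : List (List ℕ)),
    q ≠ [] → u ≠ [] → (∀ w ∈ u, w ≠ []) →
    (∃ w ∈ u, 2 ≤ w.length) →
    (∀ x ∈ q, ∃ w ∈ u, x ∈ w) →
    (∀ x y : ℕ, ({x, y} : Multiset ℕ) ≤ (↑q : Multiset ℕ) →
       ∃ w ∈ u, ∃ p : Multiset ℕ, Multiset.card p = 2 ∧
         p ≤ (↑w : Multiset ℕ) ∧ ∀ z ∈ p, z = x ∨ z = y) →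
    ∀ φ : ℕ → Fin 3,
      max ((q.map φ).foldr mul53 0)
          ((u.map fun w => (w.map φ).foldr mul53 0).foldr max 0)
        = (u.map fun w => (w.map φ).foldr mul53 0).foldr max 0 := by
  intro q u hq hu hne hlen hocc hpair φ
  apply max_eq_right
  have key : ∃ w ∈ u, (q.map φ).foldr mul53 0 ≤ (w.map φ).foldr mul53 0 := by
    by_cases h2 : ∃ x ∈ q, φ x = 2
    · -- some variable of q has value ∞; it occurs in some w, making w's value ∞
      obtain ⟨x, hx, hx2⟩ := h2
      obtain ⟨w, hw, hxw⟩ := hocc x hx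
      refine ⟨w, hw, ?_⟩
      rw [Fin.le_def, foldr_val, foldr_val]
      have h2w : 2 ≤ (w.map fun z => (φ z).val).sum := by
        have hm : (φ x).val ∈ w.map fun z => (φ z).val := List.mem_map.2 ⟨x, hxw, rfl⟩
        have := List.single_le_sum (l := w.map fun z => (φ z).val)
          (by intro y _; exact Nat.zero_le y) _ hm
        rw [hx2] at this
        exact this
      omega
    · push_neg at h2
      have hle1 : ∀ x ∈ q, (φ x).val ≤ 1 := by
        intro x hx
        have h3 := (φ x).isLt
        have : (φ x).val ≠ 2 := fun h => h2 x hx (Fin.ext h)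
        omega
      set S := (q.map fun z => (φ z).val).sum with hS
      by_cases hS2 : 2 ≤ S
      · -- at least two occurrences of value a in q: use the pair hypothesis
        set F := (↑q : Multiset ℕ).filter (fun z => φ z = 1) with hF
        have hcard : 2 ≤ Multiset.card F := by
          -- S = card F since entries ≤ 1 and non-filtered entries are 0
          have hsplit : ((↑q : Multiset ℕ).map fun z => (φ z).val).sum
              = (F.map fun z => (φ z).val).sum
                + (((↑q : Multiset ℕ).filter (fun z => ¬ φ z = 1)).map fun z => (φ z).val).sum := by
            rw [← Multiset.sum_add, ← Multiset.map_add, Multiset.filter_add_not]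
          have hzero : (((↑q : Multiset ℕ).filter (fun z => ¬ φ z = 1)).map fun z => (φ z).val).sum = 0 := by
            apply Multiset.sum_eq_zero
            intro v hv
            obtain ⟨z, hz, rfl⟩ := Multiset.mem_map.1 hv
            have hz' := Multiset.mem_filter.1 hz
            have hzq : z ∈ q := by simpa using hz'.1
            have := hle1 z hzq
            have hne1 : (φ z).val ≠ 1 := fun h => hz'.2 (Fin.ext h)
            omega
          have hFcard : (F.map fun z => (φ z).val).sum ≤ Multiset.card F := by
            calc (F.map fun z => (φ z).val).sum ≤ Multiset.card (F.map fun z => (φ z).val) * 1 := by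
                  apply Multiset.sum_le_card_nsmul
                  intro v hv
                  obtain ⟨z, hz, rfl⟩ := Multiset.mem_map.1 hv
                  exact hle1 z (by simpa using (Multiset.mem_filter.1 hz).1)
              _ = Multiset.card F := by rw [Multiset.card_map]; ring
          have hSq : ((↑q : Multiset ℕ).map fun z => (φ z).val).sum = S := by
            simp [hS]
          omega
        -- extract two elements of F
        obtain ⟨x, hxF⟩ := Multiset.card_pos_iff_exists_mem.1
          (show 0 < Multiset.card F by omega)
        obtain ⟨F', hF'⟩ := Multiset.exists_cons_of_mem hxF
        have hcard' : 0 < Multiset.card F' := by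
          rw [hF', Multiset.card_cons] at hcard; omega
        obtain ⟨y, hyF'⟩ := Multiset.card_pos_iff_exists_mem.1 hcard'
        obtain ⟨F'', hF''⟩ := Multiset.exists_cons_of_mem hyF'
        have hyF : y ∈ F := by rw [hF']; exact Multiset.mem_cons_of_mem hyF'
        have hxyF : ({x, y} : Multiset ℕ) ≤ F := by
          rw [hF', hF'', Multiset.insert_eq_cons]
          exact Multiset.cons_le_cons x (Multiset.cons_le_cons y (Multiset.zero_le _))
        have hxyq : ({x, y} : Multiset ℕ) ≤ (↑q : Multiset ℕ) :=
          le_trans hxyF (Multiset.filter_le _ _)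
        have hx1 : φ x = 1 := by
          have := hxF; rw [hF] at this; exact (Multiset.mem_filter.1 this).2
        have hy1 : φ y = 1 := by
          have := hyF; rw [hF] at this; exact (Multiset.mem_filter.1 this).2
        obtain ⟨w, hw, p, hpcard, hpw, hpz⟩ := hpair x y hxyq
        refine ⟨w, hw, ?_⟩
        rw [Fin.le_def, foldr_val, foldr_val]
        have hpsum : (p.map fun z => (φ z).val).sum = 2 := by
          obtain ⟨a, b, rfl⟩ := Multiset.card_eq_two.1 hpcard
          have ha : φ a = 1 := by
            rcases hpz a (by simp) with h | h <;> rw [h] <;> assumption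
          have hb : φ b = 1 := by
            rcases hpz b (by simp) with h | h <;> rw [h] <;> assumption
          simp [Multiset.insert_eq_cons, ha, hb]
        have hmono : (p.map fun z => (φ z).val).sum
            ≤ (((↑w : Multiset ℕ)).map fun z => (φ z).val).sum := by
          obtain ⟨d, hd⟩ := Multiset.le_iff_exists_add.1 (Multiset.map_le_map hpw)
          rw [hd, Multiset.sum_add]; omega
        have hcoe : (((↑w : Multiset ℕ)).map fun z => (φ z).val).sum
            = (w.map fun z => (φ z).val).sum := by simp
        omega
      · -- S ≤ 1, value of q is at most a; find w containing a variable of q with value ≥ value of q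
        interval_cases S
        · obtain ⟨w, hw⟩ := List.exists_mem_of_ne_nil u hu
          refine ⟨w, hw, ?_⟩
          rw [Fin.le_def, foldr_val, foldr_val, ← hS]
          simp
        · -- S = 1 : some x with value 1
          have hx : ∃ x ∈ q, (φ x).val = 1 := by
            by_contra h
            push_neg at h
            have : S = 0 := by
              apply List.sum_eq_zero
              intro v hv
              obtain ⟨z, hz, rfl⟩ := List.mem_map.1 hv
              have := hle1 z hz
              have := h z hz
              omega
            omega
          obtain ⟨x, hxq, hx1⟩ := hx
          obtain ⟨w, hw, hxw⟩ := hocc x hxq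
          refine ⟨w, hw, ?_⟩
          rw [Fin.le_def, foldr_val, foldr_val, ← hS]
          have hm : (φ x).val ∈ w.map fun z => (φ z).val := List.mem_map.2 ⟨x, hxw, rfl⟩
          have := List.single_le_sum (l := w.map fun z => (φ z).val)
            (by intro y _; exact Nat.zero_le y) _ hm
          omega
  obtain ⟨w, hw, hle⟩ := key
  exact le_trans hle (le_foldr_max _ _ (List.mem_map.2 ⟨w, hw, rfl⟩))
end

section
/- Let S be an ai-semiring and q ≤ u an inequality, where u = u₁ + ⋯ + uₙ with each uᵢ and q words. Then q ≤ u holds in S^0 (the extension of S by an additive identity and multiplicative zero 0) if and only if the inequality q ≤ Σ{uᵢ : variables of uᵢ ⊆ variables of q} holds in S (in particular, the set of uᵢ whose variable set is contained in that of q must be nonempty). -/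
/-- Addition on `S ∪ {0}` (modelled as `Option S`, with `none` the new element 0). -/
def addZero {S : Type*} (add : S → S → S) : Option S → Option S → Option S
  | none, y => y
  | some a, none => some a
  | some a, some b => some (add a b)

/-- Multiplication on `S ∪ {0}` (modelled as `Option S`, with `none` the new element 0). -/
def mulZero {S : Type*} (mul : S → S → S) : Option S → Option S → Option S
  | none, _ => none
  | some _, none => none
  | some a, some b => some (mul a b)

/-- Fold of a binary operation over a nonempty list, starting from its head
(the default `d` is only used for the empty list). -/
def fold1 {α : Type*} (op : α → α → α) (d : α) : List α → α
  | [] => d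
  | x :: xs => xs.foldl op x

/-- Evaluation of a (nonempty) word, represented as a list of variables. -/
def evalW {α : Type*} (mul : α → α → α) (d : α) (φ : ℕ → α) (w : List ℕ) : α :=
  fold1 mul d (w.map φ)

/-- Evaluation of a term `u₁ + ⋯ + uₙ`, represented as a list of words. -/
def evalT {α : Type*} (add mul : α → α → α) (d : α) (φ : ℕ → α) (u : List (List ℕ)) : α :=
  fold1 add d (u.map (evalW mul d φ))

/-!
Under an assignment `ψ` into `S^0`, a word evaluates to `0` as soon as one of its variables
does, and otherwise to its value in `S`; since `0` is the additive identity, `u` evaluates to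
the sum in `S^0` of the words all of whose variables are nonzero (`0` if there are none).
Sending the variables of `q` into `S` and all others to `0` leaves exactly `D_q(u)`, which is
therefore nonempty and dominates `q` in `S`. Conversely, if `q` evaluates to a nonzero element,
the surviving words of `u` contain `D_q(u)`, and adding further summands preserves `q ≤ D_q(u)`.
-/

theorem fold1_map_some {α : Type*} {op : α → α → α} {op' : Option α → Option α → Option α}
    (h : ∀ a b, op' (some a) (some b) = some (op a b)) (d : α) (e : Option α) {l : List α}
    (hl : l ≠ []) : fold1 op' e (l.map some) = some (fold1 op d l) := by
  obtain ⟨x, xs, rfl⟩ := List.exists_cons_of_ne_nil hl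
  simp only [List.map_cons, fold1, List.foldl_map]
  exact List.foldl_hom some fun a b => h a b

def optSum {S : Type*} (add : S → S → S) (l : List S) : Option S :=
  (l.map some).foldl (addZero add) none

section AddZero

variable {S : Type*} {add : S → S → S}

theorem addZero_none_right (a : Option S) : addZero add a none = a := by
  cases a <;> rfl

theorem addZero_assoc (hassoc : ∀ a b c, add (add a b) c = add a (add b c))
    (a b c : Option S) : addZero add (addZero add a b) c = addZero add a (addZero add b c) := by
  cases a <;> cases b <;> cases c <;> simp [addZero, hassoc]

theorem addZero_comm (hcomm : ∀ a b, add a b = add b a) (a b : Option S) :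
    addZero add a b = addZero add b a := by
  cases a <;> cases b <;> simp [addZero, hcomm]

theorem foldl_addZero_eq_addZero (hassoc : ∀ a b c, add (add a b) c = add a (add b c))
    (L : List (Option S)) (a : Option S) :
    L.foldl (addZero add) a = addZero add a (L.foldl (addZero add) none) := by
  induction L generalizing a with
  | nil => exact (addZero_none_right a).symm
  | cons x L ih =>
    rw [List.foldl_cons, List.foldl_cons, ih, ih (addZero add none x), addZero_assoc hassoc]
    rfl

theorem foldl_addZero_reduceOption (L : List (Option S)) (a : Option S) :
    L.foldl (addZero add) a = (L.reduceOption.map some).foldl (addZero add) a := by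
  induction L generalizing a with
  | nil => rfl
  | cons x L ih =>
    cases x with
    | none => simpa [List.reduceOption_cons_of_none, addZero_none_right] using ih a
    | some b => simpa [List.reduceOption_cons_of_some] using ih _

theorem optSum_of_ne_nil (d : S) {l : List S} (hl : l ≠ []) :
    optSum add l = some (fold1 add d l) := by
  rw [optSum, ← fold1_map_some (op' := addZero add) (fun _ _ => rfl) d none hl]
  cases l <;> rfl

theorem optSum_map_filter (hassoc : ∀ a b c, add (add a b) c = add a (add b c))
    (hcomm : ∀ a b, add a b = add b a) {β : Type*} (f : β → S) (p : β → Bool) (l : List β) :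
    optSum add (l.map f) =
      addZero add (optSum add ((l.filter p).map f)) (optSum add ((l.filter (!p ·)).map f)) := by
  have : RightCommutative (addZero add) :=
    ⟨fun a b c => by rw [addZero_assoc hassoc, addZero_comm hcomm b, ← addZero_assoc hassoc]⟩
  rw [optSum, optSum, optSum, ← ((List.filter_append_perm p l).map f).map some |>.foldl_eq,
    List.map_append, List.map_append, List.foldl_append, foldl_addZero_eq_addZero hassoc]

end AddZero

section MulZero

variable {S : Type*} {mul : S → S → S}

theorem foldl_mulZero_eq_none {L : List (Option S)} {a : Option S} (h : none ∈ a :: L) :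
    L.foldl (mulZero mul) a = none := by
  induction L generalizing a with
  | nil => simpa [eq_comm] using h
  | cons y L ih =>
    apply ih
    rcases List.mem_cons.mp h with rfl | h
    · exact List.mem_cons_self
    rcases List.mem_cons.mp h with rfl | h
    · cases a <;> exact List.mem_cons_self
    · exact List.mem_cons_of_mem _ h

theorem evalW_mulZero_eq_none {ψ : ℕ → Option S} {w : List ℕ} {x : ℕ} (hx : x ∈ w)
    (hψ : ψ x = none) : evalW (mulZero mul) none ψ w = none := by
  obtain ⟨y, ys, rfl⟩ := List.exists_cons_of_ne_nil (List.ne_nil_of_mem hx)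
  apply foldl_mulZero_eq_none
  rw [← List.map_cons, ← hψ]
  exact List.mem_map_of_mem hx

theorem evalW_mulZero_eq_some (d : S) {ψ : ℕ → Option S} {φ : ℕ → S} {w : List ℕ}
    (hw : w ≠ []) (h : ∀ x ∈ w, ψ x = some (φ x)) :
    evalW (mulZero mul) none ψ w = some (evalW mul d φ w) := by
  rw [evalW, List.map_congr_left h, show w.map (fun x => some (φ x)) = (w.map φ).map some by simp]
  exact fold1_map_some (fun _ _ => rfl) d none (by simpa using hw)

end MulZero

section Evaluation

variable {S : Type*} (d : S) {add mul : S → S → S}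

theorem reduceOption_map_evalW_mulZero (ψ : ℕ → Option S) {u : List (List ℕ)}
    (hw : ∀ w ∈ u, w ≠ []) :
    (u.map (evalW (mulZero mul) none ψ)).reduceOption =
      (u.filter fun w => w.all fun x => (ψ x).isSome).map
        (evalW mul d fun x => (ψ x).getD d) := by
  induction u with
  | nil => rfl
  | cons w u ih =>
    have ih := ih fun v hv => hw v (List.mem_cons_of_mem w hv)
    by_cases hdef : w.all fun x => (ψ x).isSome
    · have hψ : ∀ x ∈ w, ψ x = some ((ψ x).getD d) := fun x hx => by
        obtain ⟨a, ha⟩ := Option.isSome_iff_exists.mp (List.all_eq_true.mp hdef x hx)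
        simp [ha]
      rw [List.map_cons, evalW_mulZero_eq_some d (hw w List.mem_cons_self) hψ,
        List.reduceOption_cons_of_some, List.filter_cons, if_pos hdef, List.map_cons, ih]
    · obtain ⟨x, hx, hψ⟩ : ∃ x ∈ w, ψ x = none := by simpa using hdef
      rw [List.map_cons, evalW_mulZero_eq_none hx hψ, List.reduceOption_cons_of_none,
        List.filter_cons, if_neg hdef, ih]

theorem evalT_addZero_mulZero (ψ : ℕ → Option S) {u : List (List ℕ)} (hw : ∀ w ∈ u, w ≠ []) :
    evalT (addZero add) (mulZero mul) none ψ u =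
      optSum add ((u.filter fun w => w.all fun x => (ψ x).isSome).map
        (evalW mul d fun x => (ψ x).getD d)) := by
  rw [evalT, ← reduceOption_map_evalW_mulZero d ψ hw, optSum, ← foldl_addZero_reduceOption]
  cases u.map (evalW (mulZero mul) none ψ) <;> rfl

/-- The list `D_q(u)`. -/
def wordsWithin (q : List ℕ) (u : List (List ℕ)) : List (List ℕ) :=
  u.filter fun w => w.all fun x => decide (x ∈ q)

theorem evalT_addZero_mulZero_restrict (φ : ℕ → S) (q : List ℕ) {u : List (List ℕ)}
    (hw : ∀ w ∈ u, w ≠ []) :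
    evalT (addZero add) (mulZero mul) none (fun x => if x ∈ q then some (φ x) else none) u =
      optSum add ((wordsWithin q u).map (evalW mul d φ)) := by
  rw [evalT_addZero_mulZero d _ hw]
  congr 1
  rw [List.filter_congr (q := fun w => w.all fun x => decide (x ∈ q)) fun w _ => by
    simp [apply_ite Option.isSome]]
  refine List.map_congr_left fun w hw => congrArg (fold1 mul d) (List.map_congr_left fun x hx => ?_)
  have hxq : x ∈ q := by simpa using List.all_eq_true.mp (List.mem_filter.mp hw).2 x hx
  simp [hxq]

theorem filter_isSome_filter_eq_wordsWithin {ψ : ℕ → Option S} {q : List ℕ}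
    (hq : ∀ x ∈ q, ψ x ≠ none) (u : List (List ℕ)) :
    (u.filter fun w => w.all fun x => (ψ x).isSome).filter
      (fun w => w.all fun x => decide (x ∈ q)) = wordsWithin q u := by
  rw [List.filter_filter]
  refine List.filter_congr fun w _ => ?_
  by_cases hwq : w.all fun x => decide (x ∈ q)
  · have hwψ : w.all fun x => (ψ x).isSome := List.all_eq_true.mpr fun x hx =>
      Option.isSome_iff_ne_none.mpr (hq x (by simpa using List.all_eq_true.mp hwq x hx))
    simp [hwq, hwψ]
  · simp [hwq]

end Evaluation

def HoldsIn {α : Type*} (add mul : α → α → α) (d : α) (q : List ℕ) (u : List (List ℕ)) : Prop :=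
  ∀ φ : ℕ → α, add (evalW mul d φ q) (evalT add mul d φ u) = evalT add mul d φ u

namespace HoldsIn

variable {S : Type*} {add mul : S → S → S} {q : List ℕ} {u : List (List ℕ)}

theorem restrict (d : S) (h : HoldsIn (addZero add) (mulZero mul) none q u) (hq : q ≠ [])
    (hw : ∀ w ∈ u, w ≠ []) (φ : ℕ → S) :
    addZero add (some (evalW mul d φ q)) (optSum add ((wordsWithin q u).map (evalW mul d φ))) =
      optSum add ((wordsWithin q u).map (evalW mul d φ)) := by
  simpa only [evalW_mulZero_eq_some d hq fun x hx => if_pos hx,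
    evalT_addZero_mulZero_restrict d φ q hw] using h fun x => if x ∈ q then some (φ x) else none

theorem wordsWithin_ne_nil (d : S) (h : HoldsIn (addZero add) (mulZero mul) none q u)
    (hq : q ≠ []) (hw : ∀ w ∈ u, w ≠ []) : wordsWithin q u ≠ [] := fun hD => by
  simpa [hD, optSum, addZero] using restrict d h hq hw fun _ => d

theorem of_addZero_mulZero (d : S) (h : HoldsIn (addZero add) (mulZero mul) none q u)
    (hq : q ≠ []) (hw : ∀ w ∈ u, w ≠ []) : HoldsIn add mul d q (wordsWithin q u) := fun φ => by
  have hrestrict := restrict d h hq hw φ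
  rw [optSum_of_ne_nil d (List.map_eq_nil_iff.not.mpr (wordsWithin_ne_nil d h hq hw))]
    at hrestrict
  exact Option.some_injective _ hrestrict

theorem addZero_mulZero (d : S) (hassoc : ∀ a b c, add (add a b) c = add a (add b c))
    (hcomm : ∀ a b, add a b = add b a) (hq : q ≠ []) (hw : ∀ w ∈ u, w ≠ [])
    (hD : wordsWithin q u ≠ []) (h : HoldsIn add mul d q (wordsWithin q u)) :
    HoldsIn (addZero add) (mulZero mul) none q u := by
  intro ψ
  by_cases hzero : ∃ x ∈ q, ψ x = none
  · obtain ⟨x, hx, hψx⟩ := hzero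
    rw [evalW_mulZero_eq_none hx hψx]
    rfl
  push Not at hzero
  set φ : ℕ → S := fun x => (ψ x).getD d
  have hqψ : evalW (mulZero mul) none ψ q = some (evalW mul d φ q) :=
    evalW_mulZero_eq_some d hq fun x hx => by
      obtain ⟨a, ha⟩ := Option.ne_none_iff_exists'.mp (hzero x hx)
      simp [φ, ha]
  rw [evalT_addZero_mulZero d ψ hw, hqψ, optSum_map_filter hassoc hcomm _
    (fun w => w.all fun x => decide (x ∈ q)), filter_isSome_filter_eq_wordsWithin hzero,
    optSum_of_ne_nil d (List.map_eq_nil_iff.not.mpr hD), ← addZero_assoc hassoc]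
  exact congrArg (addZero add · _) (congrArg some (h φ))

end HoldsIn

theorem stmt16_general {S : Type*} (d : S) (add mul : S → S → S)
    (hAddAssoc : ∀ a b c, add (add a b) c = add a (add b c))
    (hAddComm : ∀ a b, add a b = add b a)
    (q : List ℕ) (u : List (List ℕ))
    (hq : q ≠ []) (hw : ∀ w ∈ u, w ≠ []) :
    ((∀ ψ : ℕ → Option S,
        addZero add (evalW (mulZero mul) none ψ q)
            (evalT (addZero add) (mulZero mul) none ψ u)
          = evalT (addZero add) (mulZero mul) none ψ u)
      ↔ (u.filter (fun w => w.all (fun x => decide (x ∈ q))) ≠ [] ∧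
         ∀ φ : ℕ → S,
           add (evalW mul d φ q)
               (evalT add mul d φ (u.filter (fun w => w.all (fun x => decide (x ∈ q)))))
             = evalT add mul d φ (u.filter (fun w => w.all (fun x => decide (x ∈ q)))))) :=
  ⟨fun h => ⟨HoldsIn.wordsWithin_ne_nil d h hq hw, HoldsIn.of_addZero_mulZero d h hq hw⟩,
    fun ⟨hD, h⟩ => HoldsIn.addZero_mulZero d hAddAssoc hAddComm hq hw hD h⟩

/-- Let `S` be an ai-semiring and `q ≤ u₁ + ⋯ + uₙ` an inequality between words.
Then `q ≤ u` holds in `S^0` iff the list `D_q(u)` of those `uᵢ` whose variables are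
contained in the variables of `q` is nonempty and `q ≤ D_q(u)` holds in `S`. -/
theorem stmt16 {S : Type*} (d : S) (add mul : S → S → S)
    (hAddAssoc : ∀ a b c, add (add a b) c = add a (add b c))
    (hAddComm : ∀ a b, add a b = add b a)
    (hAddIdem : ∀ a, add a a = a)
    (hMulAssoc : ∀ a b c, mul (mul a b) c = mul a (mul b c))
    (hDistribL : ∀ a b c, mul a (add b c) = add (mul a b) (mul a c))
    (hDistribR : ∀ a b c, mul (add a b) c = add (mul a c) (mul b c))
    (q : List ℕ) (u : List (List ℕ))
    (hq : q ≠ []) (hu : u ≠ []) (hw : ∀ w ∈ u, w ≠ []) :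
    ((∀ ψ : ℕ → Option S,
        addZero add (evalW (mulZero mul) none ψ q)
            (evalT (addZero add) (mulZero mul) none ψ u)
          = evalT (addZero add) (mulZero mul) none ψ u)
      ↔ (u.filter (fun w => w.all (fun x => decide (x ∈ q))) ≠ [] ∧
         ∀ φ : ℕ → S,
           add (evalW mul d φ q)
               (evalT add mul d φ (u.filter (fun w => w.all (fun x => decide (x ∈ q)))))
             = evalT add mul d φ (u.filter (fun w => w.all (fun x => decide (x ∈ q)))))) :=
  stmt16_general d add mul hAddAssoc hAddComm q u hq hw
end

section
/- For n ≥ 2 and 0 ≤ k ≤ n, no two distinct words of the term u_{n,k} = x₁⋯xₙ + Σ_{i=1}^{k} xᵢxₙ₊₁ + Σ_{i=k+1}^{n} xᵢxₙ₊₁yᵢ are comparable under divisibility in the free commutative monoid: if p and q are words in u_{n,k} and p divides q, then p = q. Moreover, no word of u_{n,k} is divisible by the square of a variable. -/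
/-!
Every word of u_{n,k} other than x₁⋯xₙ contains xₙ₊₁ and exactly one of x₁, …, xₙ, say xᵢ,
and is determined by i. Hence x₁⋯xₙ (which lacks xₙ₊₁ but contains both x₁ and x₂) is
incomparable with the others, and two of the others are comparable only if they share their
xᵢ, i.e. are equal. All words have pairwise distinct letters, so none is divisible by a square.
-/

/-- The word x₁⋯xₙ, with variable xᵢ encoded as the natural number i. -/
def xword (n : ℕ) : Multiset ℕ :=
  (↑((List.range n).map (· + 1)) : Multiset ℕ)

/-- The term u_{n,k} = x₁⋯xₙ + Σ_{i=1}^{k} xᵢxₙ₊₁ + Σ_{i=k+1}^{n} xᵢxₙ₊₁yᵢ, as a list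
of words (multisets of variables); variable xᵢ is encoded as i and yᵢ as n + 1 + i. -/
def unk (n k : ℕ) : List (Multiset ℕ) :=
  xword n ::
    ((List.range k).map (fun i => ({i + 1, n + 1} : Multiset ℕ)) ++
     (List.range (n - k)).map
       (fun i => ({k + i + 1, n + 1, n + 1 + (k + i + 1)} : Multiset ℕ)))

lemma mem_xword {n m : ℕ} : m ∈ xword n ↔ 1 ≤ m ∧ m ≤ n := by
  simp only [xword, Multiset.mem_coe, List.mem_map, List.mem_range]
  constructor
  · rintro ⟨i, hi, rfl⟩; omega
  · rintro ⟨h1, h2⟩; exact ⟨m - 1, by omega, by omega⟩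

lemma nodup_xword (n : ℕ) : (xword n).Nodup :=
  Multiset.coe_nodup.mpr <| List.nodup_range.map fun _ _ => Nat.succ.inj

def unkWord (n k i : ℕ) : Multiset ℕ :=
  if i ≤ k then {i, n + 1} else {i, n + 1, n + 1 + i}

section unkWord

variable {n k i j m : ℕ}

lemma mem_unkWord : m ∈ unkWord n k i ↔ m = i ∨ m = n + 1 ∨ (k < i ∧ m = n + 1 + i) := by
  unfold unkWord
  split_ifs <;> simp [Multiset.insert_eq_cons] <;> omega

lemma eq_of_mem_unkWord_of_le (hm : m ∈ unkWord n k i) (hmn : m ≤ n) : m = i := by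
  rw [mem_unkWord] at hm
  omega

lemma nodup_unkWord (hi : 1 ≤ i) (hin : i ≤ n) : (unkWord n k i).Nodup := by
  unfold unkWord
  split_ifs <;> simp [Multiset.insert_eq_cons] <;> omega

lemma eq_of_unkWord_le (hin : i ≤ n) (h : unkWord n k i ≤ unkWord n k j) : i = j :=
  eq_of_mem_unkWord_of_le (Multiset.mem_of_le h (mem_unkWord.mpr (Or.inl rfl))) hin

lemma not_unkWord_le_xword : ¬ unkWord n k i ≤ xword n := fun h => by
  have := mem_xword.mp (Multiset.mem_of_le h (mem_unkWord.mpr (Or.inr (Or.inl rfl))))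
  omega

lemma not_xword_le_unkWord (hn : 2 ≤ n) : ¬ xword n ≤ unkWord n k i := fun h => by
  have h₁ := eq_of_mem_unkWord_of_le (Multiset.mem_of_le h (mem_xword.mpr ⟨le_rfl, by omega⟩))
  have h₂ := eq_of_mem_unkWord_of_le (Multiset.mem_of_le h (mem_xword.mpr ⟨one_le_two, hn⟩))
  omega

end unkWord

lemma eq_xword_or_unkWord_of_mem_unk {n k : ℕ} {w : Multiset ℕ} (hk : k ≤ n)
    (hw : w ∈ unk n k) : w = xword n ∨ ∃ i, 1 ≤ i ∧ i ≤ n ∧ w = unkWord n k i := by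
  simp only [unk, List.mem_cons, List.mem_append, List.mem_map, List.mem_range] at hw
  rcases hw with rfl | ⟨i, hi, rfl⟩ | ⟨i, hi, rfl⟩
  · exact Or.inl rfl
  · exact Or.inr ⟨i + 1, by omega, by omega, by rw [unkWord, if_pos (by omega)]⟩
  · exact Or.inr ⟨k + i + 1, by omega, by omega, by rw [unkWord, if_neg (by omega)]⟩

lemma nodup_of_mem_unk {n k : ℕ} {w : Multiset ℕ} (hk : k ≤ n) (hw : w ∈ unk n k) :
    w.Nodup := by
  obtain rfl | ⟨i, hi, hin, rfl⟩ := eq_xword_or_unkWord_of_mem_unk hk hw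
  · exact nodup_xword n
  · exact nodup_unkWord hi hin

lemma eq_of_le_of_mem_unk {n k : ℕ} {p q : Multiset ℕ} (hn : 2 ≤ n) (hk : k ≤ n)
    (hp : p ∈ unk n k) (hq : q ∈ unk n k) (hpq : p ≤ q) : p = q := by
  obtain rfl | ⟨i, -, hin, rfl⟩ := eq_xword_or_unkWord_of_mem_unk hk hp <;>
    obtain rfl | ⟨j, -, -, rfl⟩ := eq_xword_or_unkWord_of_mem_unk hk hq
  · rfl
  · exact absurd hpq (not_xword_le_unkWord hn)
  · exact absurd hpq not_unkWord_le_xword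
  · rw [eq_of_unkWord_le hin hpq]

/-- For n ≥ 2 and 0 ≤ k ≤ n, no two distinct words of u_{n,k} are comparable under
divisibility in the free commutative monoid (multiset containment), and no word of
u_{n,k} is divisible by the square of a variable. -/
theorem stmt18 : ∀ n k : ℕ, 2 ≤ n → k ≤ n →
    ((∀ p ∈ unk n k, ∀ q ∈ unk n k, p ≤ q → p = q) ∧
     (∀ w ∈ unk n k, ∀ x : ℕ, ¬ ({x, x} : Multiset ℕ) ≤ w)) := by
  intro n k hn hk
  exact ⟨fun p hp q hq => eq_of_le_of_mem_unk hn hk hp hq,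
    fun w hw => Multiset.nodup_iff_le.mp (nodup_of_mem_unk hk hw)⟩
end
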